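/- If a cascaded sensor selection instance satisfies strong dominance, then for every k ∈ {1,…,K}, P(Y^1 ≠ Y^k) − C_k = γ_1 − (γ_k + C_k). Consequently the suboptimality gaps of the USS instance coincide with those of the associated bandit rewards: for every k, (γ_k + C_k) − min_{i∈[K]}(γ_i + C_i) = max_{i∈[K]}(P(Y^1 ≠ Y^i) − C_i) − (P(Y^1 ≠ Y^k) − C_k), and an action maximizes P(Y^1 ≠ Y^k) − C_k if and only if it minimizes γ_k + C_k. -/

import Mathlib

open MeasureTheory

/-! Under strong dominance, whenever sensor `1` is correct so is sensor `k`, so the event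
`Y^1 ≠ Y` splits disjointly into `Y^1 ≠ Y^k` and `Y^k ≠ Y` (three Boolean values cannot be
pairwise distinct). Hence `P(Y^1 ≠ Y^k) = γ_1 - γ_k`, so the bandit reward
`P(Y^1 ≠ Y^k) - C_k` is the constant `γ_1` minus the expected cost `γ_k + C_k`, and a
constant minus a function has the same gaps and the same optimisers, with max and min swapped. -/

/-- Error probability `γ_k = P(Y^k ≠ Y)` of sensor `k`. -/
noncomputable def gam {Ω : Type} [MeasurableSpace Ω] (μ : Measure Ω) {K : ℕ}
    (Y : Ω → Bool) (S : Fin K → Ω → Bool) (k : Fin K) : ℝ :=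
  (μ {ω | S k ω ≠ Y ω}).toReal

/-- Disagreement probability `P(Y^i ≠ Y^j)` between sensors `i` and `j`. -/
noncomputable def dis {Ω : Type} [MeasurableSpace Ω] (μ : Measure Ω) {K : ℕ}
    (S : Fin K → Ω → Bool) (i j : Fin K) : ℝ :=
  (μ {ω | S i ω ≠ S j ω}).toReal

/-- Cumulative cost `C_k = c_1 + ⋯ + c_k`. -/
noncomputable def cumCost {K : ℕ} (c : Fin K → ℝ) (k : Fin K) : ℝ :=
  ∑ i ∈ Finset.univ.filter (fun i : Fin K => i ≤ k), c i

lemma Bool.ne_iff_ne_or_ne_of_imp {a b c : Bool} (h : a = c → b = c) :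
    a ≠ c ↔ a ≠ b ∨ b ≠ c := by
  revert a b c; decide

lemma Bool.eq_of_ne_of_ne {a b c : Bool} (hab : a ≠ b) (hbc : b ≠ c) : a = c := by
  revert a b c; decide

lemma measure_setOf_ne_eq_add_of_ae_imp {Ω : Type*} [MeasurableSpace Ω] (μ : Measure Ω)
    {f g h : Ω → Bool} (hg : Measurable g) (hh : Measurable h)
    (hfg : ∀ᵐ ω ∂μ, f ω = h ω → g ω = h ω) :
    μ {ω | f ω ≠ h ω} = μ {ω | f ω ≠ g ω} + μ {ω | g ω ≠ h ω} := by
  have hunion : {ω | f ω ≠ h ω} =ᵐ[μ] ({ω | f ω ≠ g ω} ∪ {ω | g ω ≠ h ω} : Set Ω) :=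
    Filter.eventuallyEq_set.mpr (hfg.mono fun ω => Bool.ne_iff_ne_or_ne_of_imp)
  have hdisj : AEDisjoint μ {ω | f ω ≠ g ω} {ω | g ω ≠ h ω} :=
    measure_mono_null (t := {ω | ¬(f ω = h ω → g ω = h ω)})
      (fun ω ⟨hne₁, hne₂⟩ himp => hne₂ (himp (Bool.eq_of_ne_of_ne hne₁ hne₂))) (ae_iff.mp hfg)
  rw [measure_congr hunion]
  exact measure_union₀ (measurableSet_eq_fun hg hh).compl.nullMeasurableSet hdisj

lemma Finset.sup'_const_sub {ι α : Type*} [AddCommGroup α] [LinearOrder α]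
    [IsOrderedAddMonoid α] {s : Finset ι} (H : s.Nonempty) (a : α) (f : ι → α) :
    s.sup' H (fun i => a - f i) = a - s.inf' H f := by
  refine le_antisymm (Finset.sup'_le _ _ fun i hi => sub_le_sub_left (Finset.inf'_le f hi) a) ?_
  obtain ⟨i, hi, hfi⟩ := Finset.exists_mem_eq_inf' H f
  exact hfi ▸ Finset.le_sup' (fun i => a - f i) hi

lemma gam_eq_dis_add_gam {Ω : Type} [MeasurableSpace Ω] (μ : Measure Ω) [IsFiniteMeasure μ]
    {K : ℕ} {Y : Ω → Bool} {S : Fin K → Ω → Bool} {i j : Fin K} (hY : Measurable Y)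
    (hSj : Measurable (S j)) (hij : ∀ᵐ ω ∂μ, S i ω = Y ω → S j ω = Y ω) :
    gam μ Y S i = dis μ S i j + gam μ Y S j := by
  rw [gam, gam, dis, measure_setOf_ne_eq_add_of_ae_imp μ hSj hY hij,
    ENNReal.toReal_add (measure_ne_top _ _) (measure_ne_top _ _)]

theorem strong_dominance_bandit_reduction_general
    {Ω : Type} [MeasurableSpace Ω] (μ : Measure Ω) [IsProbabilityMeasure μ]
    {K : ℕ} (hK : 0 < K) (Y : Ω → Bool) (S : Fin K → Ω → Bool)
    (hY : Measurable Y) (hS : ∀ k, Measurable (S k))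
    (c : Fin K → ℝ)
    (hSD : ∀ i j : Fin K, i ≤ j → ∀ᵐ ω ∂μ, S i ω = Y ω → S j ω = Y ω) :
    (∀ k : Fin K, dis μ S ⟨0, hK⟩ k - cumCost c k
        = gam μ Y S ⟨0, hK⟩ - (gam μ Y S k + cumCost c k)) ∧
    (∀ k : Fin K,
      (gam μ Y S k + cumCost c k)
          - Finset.univ.inf' ⟨⟨0, hK⟩, Finset.mem_univ _⟩
              (fun i => gam μ Y S i + cumCost c i)
        = Finset.univ.sup' ⟨⟨0, hK⟩, Finset.mem_univ _⟩
              (fun i => dis μ S ⟨0, hK⟩ i - cumCost c i)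
          - (dis μ S ⟨0, hK⟩ k - cumCost c k)) ∧
    (∀ k : Fin K,
      (∀ i, dis μ S ⟨0, hK⟩ i - cumCost c i ≤ dis μ S ⟨0, hK⟩ k - cumCost c k) ↔
      (∀ i, gam μ Y S k + cumCost c k ≤ gam μ Y S i + cumCost c i)) := by
  have hreward : ∀ k : Fin K, dis μ S ⟨0, hK⟩ k - cumCost c k
      = gam μ Y S ⟨0, hK⟩ - (gam μ Y S k + cumCost c k) := fun k => by
    rw [gam_eq_dis_add_gam μ hY (hS k) (hSD ⟨0, hK⟩ k (Nat.zero_le _))]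
    ring
  refine ⟨hreward, fun k => ?_, fun k => ?_⟩
  · have hsup := Finset.sup'_const_sub ⟨⟨0, hK⟩, Finset.mem_univ _⟩ (gam μ Y S ⟨0, hK⟩)
      (fun i => gam μ Y S i + cumCost c i)
    simp only [hreward, hsup]
    ring
  · simp only [hreward, sub_le_sub_iff_left]

/-- Under strong dominance, for every `k`,
`P(Y^1 ≠ Y^k) − C_k = γ_1 − (γ_k + C_k)`; consequently the suboptimality gaps of the USS
instance coincide with those of the associated bandit rewards
`r_k = P(Y^1 ≠ Y^k) − C_k`, and an action maximizes `r_k` iff it minimizes `γ_k + C_k`.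
(Sensor `1` is the 0-based index `⟨0, hK⟩`.) -/
theorem strong_dominance_bandit_reduction
    {Ω : Type} [MeasurableSpace Ω] (μ : Measure Ω) [IsProbabilityMeasure μ]
    {K : ℕ} (hK : 0 < K) (Y : Ω → Bool) (S : Fin K → Ω → Bool)
    (hY : Measurable Y) (hS : ∀ k, Measurable (S k))
    (c : Fin K → ℝ) (hc : ∀ k, 0 ≤ c k)
    (hmono : ∀ i j : Fin K, i ≤ j → gam μ Y S j ≤ gam μ Y S i)
    (hSD : ∀ i j : Fin K, i ≤ j → ∀ᵐ ω ∂μ, S i ω = Y ω → S j ω = Y ω) :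
    (∀ k : Fin K, dis μ S ⟨0, hK⟩ k - cumCost c k
        = gam μ Y S ⟨0, hK⟩ - (gam μ Y S k + cumCost c k)) ∧
    (∀ k : Fin K,
      (gam μ Y S k + cumCost c k)
          - Finset.univ.inf' ⟨⟨0, hK⟩, Finset.mem_univ _⟩
              (fun i => gam μ Y S i + cumCost c i)
        = Finset.univ.sup' ⟨⟨0, hK⟩, Finset.mem_univ _⟩
              (fun i => dis μ S ⟨0, hK⟩ i - cumCost c i)
          - (dis μ S ⟨0, hK⟩ k - cumCost c k)) ∧
    (∀ k : Fin K,
      (∀ i, dis μ S ⟨0, hK⟩ i - cumCost c i ≤ dis μ S ⟨0, hK⟩ k - cumCost c k) ↔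
      (∀ i, gam μ Y S k + cumCost c k ≤ gam μ Y S i + cumCost c i)) :=
  strong_dominance_bandit_reduction_general μ hK Y S hY hS c hSD
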